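/- arXiv:1209.5875 — 3 statements merged into one kernel-verified Lean document; each statement's English description precedes it below -/
import Mathlib

section
/- Let $(X_1,\mu_1)$, $(X_2,\mu_2)$, $(X_3,\mu_3)$ be compact metric spaces equipped with Borel probability measures, and let $d_{mGH}$ denote the measured Gromov–Hausdorff distance. Then $d_{mGH}((X_1,\mu_1),(X_2,\mu_2)) \le 2\,( d_{mGH}((X_1,\mu_1),(X_3,\mu_3)) + d_{mGH}((X_3,\mu_3),(X_2,\mu_2)) )$ (almost triangle inequality). -/
/-!
Composing measured approximations `X₁ → X₃ → X₂` distorts distances by at most the sum of the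
two errors, while the measure condition for the composite costs one extra error term: the
`ε`-thickening of a preimage under a `δ`-approximation lies in the preimage of the
`(ε + δ)`-thickening, which is thickened once more by the second approximation. So `ε` and `δ`
compose to `ε + 2δ ≤ 2(ε + δ)`. The admissible errors always exist since constant maps are
approximations once `ε` exceeds both diameters and both total masses.
-/

open MeasureTheory Metric

/-- An `ε`-measured-Gromov–Hausdorff approximation pair between `(X, μ)` and `(X', μ')`:
measurable `ε`-approximations `ψ : X → X'` and `ψ' : X' → X` (distorting distances by less
than `ε` and with `ε`-dense images) that almost push the measures onto each other. -/
def MGHApprox {X X' : Type*} [MetricSpace X] [MetricSpace X']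
    [MeasurableSpace X] [MeasurableSpace X']
    (μ : Measure X) (μ' : Measure X') (ε : ℝ) : Prop :=
  ∃ (ψ : X → X') (ψ' : X' → X),
    Measurable ψ ∧ Measurable ψ' ∧
    (∀ x y : X, |dist (ψ x) (ψ y) - dist x y| < ε) ∧
    (∀ x' : X', ∃ x : X, dist (ψ x) x' < ε) ∧
    (∀ x' y' : X', |dist (ψ' x') (ψ' y') - dist x' y'| < ε) ∧
    (∀ x : X, ∃ x' : X', dist (ψ' x') x < ε) ∧
    (∀ A' : Set X', MeasurableSet A' →
      μ (ψ ⁻¹' A') < μ' (thickening ε A') + ENNReal.ofReal ε) ∧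
    (∀ A : Set X, MeasurableSet A →
      μ' (ψ' ⁻¹' A) < μ (thickening ε A) + ENNReal.ofReal ε)

/-- The measured Gromov–Hausdorff "distance": the infimum of those `ε > 0` for which there
is an `ε`-measured approximation pair. -/
noncomputable def dmGH {X X' : Type*} [MetricSpace X] [MetricSpace X']
    [MeasurableSpace X] [MeasurableSpace X']
    (μ : Measure X) (μ' : Measure X') : ℝ :=
  sInf {ε : ℝ | 0 < ε ∧ MGHApprox μ μ' ε}

theorem thickening_preimage_subset_preimage_thickening {X X' : Type*} [PseudoMetricSpace X]
    [PseudoMetricSpace X'] {ψ : X → X'} {ε δ : ℝ}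
    (hψ : ∀ x y, |dist (ψ x) (ψ y) - dist x y| < δ) (A : Set X') :
    thickening ε (ψ ⁻¹' A) ⊆ ψ ⁻¹' thickening (ε + δ) A := by
  intro x hx
  obtain ⟨y, hy, hxy⟩ := mem_thickening_iff.1 hx
  have := (abs_lt.1 (hψ x y)).2
  exact mem_thickening_iff.2 ⟨ψ y, hy, by linarith⟩

section MeasuredApprox

variable {X X' X'' : Type*} [MetricSpace X] [MetricSpace X'] [MetricSpace X'']
  [MeasurableSpace X] [MeasurableSpace X'] [MeasurableSpace X'']
  {μ : Measure X} {μ' : Measure X'} {μ'' : Measure X''} {ε δ : ℝ}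

structure IsMeasuredApprox (μ : Measure X) (μ' : Measure X') (ε : ℝ) (ψ : X → X') : Prop where
  measurable : Measurable ψ
  abs_dist_sub_dist_lt : ∀ x y, |dist (ψ x) (ψ y) - dist x y| < ε
  exists_dist_lt : ∀ x', ∃ x, dist (ψ x) x' < ε
  measure_preimage_lt : ∀ A', MeasurableSet A' →
    μ (ψ ⁻¹' A') < μ' (thickening ε A') + ENNReal.ofReal ε

theorem mghApprox_iff : MGHApprox μ μ' ε ↔
    ∃ ψ ψ', IsMeasuredApprox μ μ' ε ψ ∧ IsMeasuredApprox μ' μ ε ψ' := by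
  constructor
  · rintro ⟨ψ, ψ', hψ, hψ', hdist, hdense, hdist', hdense', hμ, hμ'⟩
    exact ⟨ψ, ψ', ⟨hψ, hdist, hdense, hμ⟩, ⟨hψ', hdist', hdense', hμ'⟩⟩
  · rintro ⟨ψ, ψ', ⟨hψ, hdist, hdense, hμ⟩, ⟨hψ', hdist', hdense', hμ'⟩⟩
    exact ⟨ψ, ψ', hψ, hψ', hdist, hdense, hdist', hdense', hμ, hμ'⟩

namespace IsMeasuredApprox

theorem mono {ψ : X → X'} (h : IsMeasuredApprox μ μ' ε ψ) (hεδ : ε ≤ δ) :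
    IsMeasuredApprox μ μ' δ ψ where
  measurable := h.measurable
  abs_dist_sub_dist_lt x y := (h.abs_dist_sub_dist_lt x y).trans_le hεδ
  exists_dist_lt x' := (h.exists_dist_lt x').imp fun _ hx => hx.trans_le hεδ
  measure_preimage_lt A' hA' := (h.measure_preimage_lt A' hA').trans_le <|
    add_le_add (measure_mono (thickening_mono hεδ _)) (ENNReal.ofReal_le_ofReal hεδ)

theorem comp [OpensMeasurableSpace X'] {ψ₁ : X → X''} {ψ₂ : X'' → X'}
    (h₁ : IsMeasuredApprox μ μ'' ε ψ₁) (h₂ : IsMeasuredApprox μ'' μ' δ ψ₂)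
    (hε : 0 ≤ ε) (hδ : 0 ≤ δ) :
    IsMeasuredApprox μ μ' (ε + 2 * δ) (ψ₂ ∘ ψ₁) where
  measurable := h₂.measurable.comp h₁.measurable
  abs_dist_sub_dist_lt x y := by
    have h₁xy := abs_lt.1 (h₁.abs_dist_sub_dist_lt x y)
    have h₂xy := abs_lt.1 (h₂.abs_dist_sub_dist_lt (ψ₁ x) (ψ₁ y))
    simp only [Function.comp_apply, abs_lt]
    constructor <;> linarith
  exists_dist_lt x' := by
    obtain ⟨z, hz⟩ := h₂.exists_dist_lt x'
    obtain ⟨x, hx⟩ := h₁.exists_dist_lt z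
    have := (abs_lt.1 (h₂.abs_dist_sub_dist_lt (ψ₁ x) z)).2
    exact ⟨x, (dist_triangle (ψ₂ (ψ₁ x)) (ψ₂ z) x').trans_lt (by linarith)⟩
  measure_preimage_lt A' hA' := by
    have hthick : thickening δ (thickening (ε + δ) A') ⊆ thickening (ε + 2 * δ) A' :=
      (thickening_thickening_subset _ _ _).trans (thickening_mono (by linarith) _)
    calc μ ((ψ₂ ∘ ψ₁) ⁻¹' A')
        < μ'' (thickening ε (ψ₂ ⁻¹' A')) + ENNReal.ofReal ε :=
          h₁.measure_preimage_lt _ (h₂.measurable hA')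
      _ ≤ μ'' (ψ₂ ⁻¹' thickening (ε + δ) A') + ENNReal.ofReal ε := by
          gcongr
          exact thickening_preimage_subset_preimage_thickening h₂.abs_dist_sub_dist_lt A'
      _ < μ' (thickening δ (thickening (ε + δ) A')) + ENNReal.ofReal δ + ENNReal.ofReal ε :=
          ENNReal.add_lt_add_right ENNReal.ofReal_ne_top
            (h₂.measure_preimage_lt _ isOpen_thickening.measurableSet)
      _ ≤ μ' (thickening (ε + 2 * δ) A') + ENNReal.ofReal (ε + 2 * δ) := by
          rw [add_assoc, ← ENNReal.ofReal_add hδ hε]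
          exact add_le_add (measure_mono hthick) (ENNReal.ofReal_le_ofReal (by linarith))

theorem const [BoundedSpace X] [BoundedSpace X'] [Nonempty X] (x₀' : X')
    (hX : diam (Set.univ : Set X) < ε) (hX' : diam (Set.univ : Set X') < ε)
    (hμ : μ Set.univ < ENNReal.ofReal ε) :
    IsMeasuredApprox μ μ' ε fun _ => x₀' where
  measurable := measurable_const
  abs_dist_sub_dist_lt x y := by
    rw [dist_self, zero_sub, abs_neg, abs_of_nonneg dist_nonneg]
    exact (dist_le_diam_of_mem BoundedSpace.bounded_univ trivial trivial).trans_lt hX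
  exists_dist_lt x' := ⟨Classical.arbitrary X,
    (dist_le_diam_of_mem BoundedSpace.bounded_univ trivial trivial).trans_lt hX'⟩
  measure_preimage_lt _ _ := (measure_mono (Set.subset_univ _)).trans_lt <|
    hμ.trans_le le_add_self

end IsMeasuredApprox

theorem MGHApprox.comp [OpensMeasurableSpace X] [OpensMeasurableSpace X']
    (h₁ : MGHApprox μ μ'' ε) (h₂ : MGHApprox μ'' μ' δ) (hε : 0 ≤ ε) (hδ : 0 ≤ δ) :
    MGHApprox μ μ' (2 * (ε + δ)) := by
  obtain ⟨ψ₁, ψ₁', h₁, h₁'⟩ := mghApprox_iff.1 h₁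
  obtain ⟨ψ₂, ψ₂', h₂, h₂'⟩ := mghApprox_iff.1 h₂
  exact mghApprox_iff.2 ⟨ψ₂ ∘ ψ₁, ψ₁' ∘ ψ₂', (h₁.comp h₂ hε hδ).mono (by linarith),
    (h₂'.comp h₁' hδ hε).mono (by linarith)⟩

theorem exists_pos_mghApprox [BoundedSpace X] [BoundedSpace X'] [Nonempty X] [Nonempty X']
    (μ : Measure X) (μ' : Measure X') [IsFiniteMeasure μ] [IsFiniteMeasure μ'] :
    ∃ ε, 0 < ε ∧ MGHApprox μ μ' ε := by
  set ε := diam (Set.univ : Set X) + diam (Set.univ : Set X') + μ.real Set.univ +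
    μ'.real Set.univ + 1 with hε
  have hμ₀ : 0 ≤ μ.real Set.univ := measureReal_nonneg
  have hμ₀' : 0 ≤ μ'.real Set.univ := measureReal_nonneg
  have hX : 0 ≤ diam (Set.univ : Set X) := diam_nonneg
  have hX' : 0 ≤ diam (Set.univ : Set X') := diam_nonneg
  have hμ : μ Set.univ < ENNReal.ofReal ε := by
    rw [← ofReal_measureReal]
    exact (ENNReal.ofReal_lt_ofReal_iff (by positivity)).2 (by linarith)
  have hμ' : μ' Set.univ < ENNReal.ofReal ε := by
    rw [← ofReal_measureReal]
    exact (ENNReal.ofReal_lt_ofReal_iff (by positivity)).2 (by linarith)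
  refine ⟨ε, by positivity, mghApprox_iff.2 ⟨_, _,
    IsMeasuredApprox.const (Classical.arbitrary X') (by linarith) (by linarith) hμ,
    IsMeasuredApprox.const (Classical.arbitrary X) (by linarith) (by linarith) hμ'⟩⟩

end MeasuredApprox

theorem csInf_le_two_mul_add_csInf {S T U : Set ℝ} (hS : S.Nonempty) (hT : T.Nonempty)
    (hU : BddBelow U) (h : ∀ ε ∈ S, ∀ δ ∈ T, 2 * (ε + δ) ∈ U) :
    sInf U ≤ 2 * (sInf S + sInf T) := by
  have : sInf U / 2 - sInf S ≤ sInf T := le_csInf hT fun δ hδ => by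
    have : sInf U / 2 - δ ≤ sInf S := le_csInf hS fun ε hε => by
      linarith [csInf_le hU (h ε hε δ hδ)]
    linarith
  linarith

theorem dmGH_almost_triangle_general
    {X₁ X₂ X₃ : Type*} [MetricSpace X₁] [MetricSpace X₂] [MetricSpace X₃]
    [CompactSpace X₁] [CompactSpace X₂] [CompactSpace X₃]
    [MeasurableSpace X₁] [MeasurableSpace X₂] [MeasurableSpace X₃]
    [BorelSpace X₁] [BorelSpace X₂]
    (μ₁ : Measure X₁) (μ₂ : Measure X₂) (μ₃ : Measure X₃)
    [IsProbabilityMeasure μ₁] [IsProbabilityMeasure μ₂] [IsProbabilityMeasure μ₃] :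
    dmGH μ₁ μ₂ ≤ 2 * (dmGH μ₁ μ₃ + dmGH μ₃ μ₂) := by
  have := nonempty_of_isProbabilityMeasure μ₁
  have := nonempty_of_isProbabilityMeasure μ₂
  have := nonempty_of_isProbabilityMeasure μ₃
  exact csInf_le_two_mul_add_csInf (exists_pos_mghApprox μ₁ μ₃) (exists_pos_mghApprox μ₃ μ₂)
    ⟨0, fun _ hε => hε.1.le⟩ fun ε hε δ hδ =>
      ⟨by linarith [hε.1, hδ.1], hε.2.comp hδ.2 hε.1.le hδ.1.le⟩

/-- Almost triangle inequality for the measured Gromov–Hausdorff distance. -/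
theorem dmGH_almost_triangle
    {X₁ X₂ X₃ : Type*} [MetricSpace X₁] [MetricSpace X₂] [MetricSpace X₃]
    [CompactSpace X₁] [CompactSpace X₂] [CompactSpace X₃]
    [MeasurableSpace X₁] [MeasurableSpace X₂] [MeasurableSpace X₃]
    [BorelSpace X₁] [BorelSpace X₂] [BorelSpace X₃]
    (μ₁ : Measure X₁) (μ₂ : Measure X₂) (μ₃ : Measure X₃)
    [IsProbabilityMeasure μ₁] [IsProbabilityMeasure μ₂] [IsProbabilityMeasure μ₃] :
    dmGH μ₁ μ₂ ≤ 2 * (dmGH μ₁ μ₃ + dmGH μ₃ μ₂) :=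
  dmGH_almost_triangle_general μ₁ μ₂ μ₃
end

section
/- Let $(X,\mu)$ and $(X',\mu')$ be compact metric spaces with Borel probability measures. If $d_{mGH}((X,\mu),(X',\mu'))=0$, then there exists an isometry $\psi:X\to X'$ such that the pushforward measure satisfies $\psi_*\mu=\mu'$. -/
/-!
Choose `εₙ`-approximations `Fₙ : X → X'` with `εₙ → 0` and let `ψ` be their pointwise limit
along an ultrafilter, which exists since `X'` is compact. Vanishing distortion makes `ψ` an
isometry, and on the compact space `X` the convergence is then uniform. Uniform convergence
transfers `εₙ`-density of the images into surjectivity of `ψ`, and the measure condition into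
`μ (ψ⁻¹' A) ≤ μ' A` for closed `A`; by inner regularity by closed sets, two probability
measures comparable in this way coincide.
-/

open MeasureTheory Metric

open Filter Set Topology

section Approximations

variable {X X' : Type*} [MetricSpace X] [MetricSpace X'] [MeasurableSpace X] [MeasurableSpace X']
  {μ : Measure X} {μ' : Measure X'} [IsProbabilityMeasure μ] [IsProbabilityMeasure μ']

theorem mghApprox_of_forall_dist_lt {ε : ℝ} (hε : 1 < ε) (hX : ∀ x y : X, dist x y < ε)
    (hX' : ∀ x' y' : X', dist x' y' < ε) : MGHApprox μ μ' ε := by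
  obtain ⟨x₀⟩ := nonempty_of_isProbabilityMeasure μ
  obtain ⟨x₀'⟩ := nonempty_of_isProbabilityMeasure μ'
  have hmass : ∀ a : ENNReal, (1 : ENNReal) < a + ENNReal.ofReal ε := fun a =>
    (ENNReal.one_lt_ofReal.2 hε).trans_le le_add_self
  refine ⟨fun _ => x₀', fun _ => x₀, measurable_const, measurable_const, fun x y => ?_,
    fun x' => ⟨x₀, hX' _ _⟩, fun x' y' => ?_, fun x => ⟨x₀', hX _ _⟩,
    fun A' _ => prob_le_one.trans_lt (hmass _), fun A _ => prob_le_one.trans_lt (hmass _)⟩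
  · simpa using hX x y
  · simpa using hX' x' y'

theorem exists_mghApprox_lt_of_dmGH_eq_zero [BoundedSpace X] [BoundedSpace X']
    (h : dmGH μ μ' = 0) {δ : ℝ} (hδ : 0 < δ) : ∃ ε, 0 < ε ∧ ε < δ ∧ MGHApprox μ μ' ε := by
  -- `sInf ∅ = 0`, so the hypothesis says nothing until some approximation is exhibited.
  obtain ⟨C, hC⟩ := isBounded_iff.1 (BoundedSpace.bounded_univ (α := X))
  obtain ⟨C', hC'⟩ := isBounded_iff.1 (BoundedSpace.bounded_univ (α := X'))
  have hne : {ε : ℝ | 0 < ε ∧ MGHApprox μ μ' ε}.Nonempty := by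
    refine ⟨2 + |C| + |C'|, by positivity, mghApprox_of_forall_dist_lt ?_ (fun x y => ?_)
      (fun x' y' => ?_)⟩
    · linarith [abs_nonneg C, abs_nonneg C']
    · linarith [hC (mem_univ x) (mem_univ y), le_abs_self C, abs_nonneg C']
    · linarith [hC' (mem_univ x') (mem_univ y'), le_abs_self C', abs_nonneg C]
  obtain ⟨ε, ⟨hε, happrox⟩, hlt⟩ := exists_lt_of_csInf_lt hne (h.trans_lt hδ)
  exact ⟨ε, hε, hlt, happrox⟩

end Approximations

theorem le_measure_of_forall_le_thickening_add {α : Type*} [PseudoMetricSpace α]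
    [MeasurableSpace α] [OpensMeasurableSpace α] {μ : Measure α} [IsFiniteMeasure μ]
    {s : Set α} (hs : IsClosed s) {a : ENNReal}
    (h : ∀ δ > 0, a ≤ μ (thickening δ s) + ENNReal.ofReal δ) : a ≤ μ s := by
  have hlim : Tendsto (fun δ => μ (thickening δ s) + ENNReal.ofReal δ) (𝓝[>] 0)
      (𝓝 (μ s + ENNReal.ofReal 0)) :=
    (tendsto_measure_thickening_of_isClosed ⟨1, one_pos, measure_ne_top _ _⟩ hs).add
      ((ENNReal.continuous_ofReal.tendsto 0).mono_left nhdsWithin_le_nhds)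
  rw [ENNReal.ofReal_zero, add_zero] at hlim
  exact ge_of_tendsto hlim (eventually_nhdsWithin_of_forall h)

theorem MeasureTheory.Measure.eq_of_forall_isClosed_measure_le {α : Type*} [TopologicalSpace α]
    [TopologicalSpace.PseudoMetrizableSpace α] [MeasurableSpace α] [BorelSpace α]
    {ν μ : Measure α} [IsProbabilityMeasure ν] [IsProbabilityMeasure μ]
    (h : ∀ s, IsClosed s → ν s ≤ μ s) : ν = μ := by
  refine Measure.eq_of_le_of_isProbabilityMeasure (Measure.le_iff.2 fun s hs => ?_)
  rw [hs.measure_eq_iSup_isClosed_of_ne_top (measure_ne_top ν s)]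
  exact iSup₂_le fun K hK => iSup_le fun hKc => (h K hKc).trans (measure_mono hK)

section LimitOfApproximations

variable {ι X X' : Type*} [PseudoMetricSpace X'] {l : Filter ι}
  {F : ι → X → X'} {ε : ι → ℝ} {ψ : X → X'}

theorem isometry_of_tendsto_of_distortion_le [PseudoMetricSpace X] [l.NeBot]
    (hε : Tendsto ε l (𝓝 0))
    (hdist : ∀ i x y, |dist (F i x) (F i y) - dist x y| ≤ ε i)
    (hψ : ∀ x, Tendsto (fun i => F i x) l (𝓝 (ψ x))) : Isometry ψ := by
  refine Isometry.of_dist_eq fun x y => tendsto_nhds_unique ((hψ x).dist (hψ y)) ?_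
  have : Tendsto (fun i => dist (F i x) (F i y) - dist x y) l (𝓝 0) :=
    squeeze_zero_norm (fun i => hdist i x y) hε
  simpa using this.add_const (dist x y)

theorem tendstoUniformly_of_tendsto_of_distortion_le [PseudoMetricSpace X] [CompactSpace X]
    (hε : Tendsto ε l (𝓝 0))
    (hdist : ∀ i x y, |dist (F i x) (F i y) - dist x y| ≤ ε i)
    (hψ : ∀ x, Tendsto (fun i => F i x) l (𝓝 (ψ x))) (hψ_iso : Isometry ψ) :
    TendstoUniformly F ψ l := by
  refine Metric.tendstoUniformly_iff.2 fun δ hδ => ?_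
  obtain ⟨t, -, ht, hcover⟩ := finite_cover_balls_of_compact (isCompact_univ (X := X))
    (by positivity : 0 < δ / 4)
  have hnet : ∀ᶠ i in l, ∀ y ∈ t, dist (ψ y) (F i y) < δ / 4 :=
    ht.eventually_all.2 fun y _ => by
      simpa only [dist_comm] using Metric.tendsto_nhds.1 (hψ y) _ (by positivity)
  filter_upwards [hnet, hε.eventually (gt_mem_nhds (by positivity : 0 < δ / 4))]
    with i hi hεi x
  obtain ⟨y, hyt, hxy⟩ := mem_iUnion₂.1 (hcover (mem_univ x))
  rw [mem_ball] at hxy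
  have hFxy : dist (F i y) (F i x) ≤ dist x y + ε i := by
    linarith [le_abs_self (dist (F i y) (F i x) - dist y x), hdist i y x, dist_comm x y]
  calc dist (ψ x) (F i x) ≤ dist (ψ x) (ψ y) + dist (ψ y) (F i y) + dist (F i y) (F i x) :=
        dist_triangle4 _ _ _ _
    _ < δ := by linarith [hi y hyt, hψ_iso.dist_eq x y]

theorem surjective_of_tendstoUniformly [TopologicalSpace X] [CompactSpace X] [T2Space X']
    [l.NeBot]
    (hε : Tendsto ε l (𝓝 0)) (hdense : ∀ i x', ∃ x, dist (F i x) x' ≤ ε i)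
    (hunif : TendstoUniformly F ψ l) (hψ : Continuous ψ) : Function.Surjective ψ := by
  intro x'
  refine (isCompact_range hψ).isClosed.closure_subset (Metric.mem_closure_iff.2 fun δ hδ => ?_)
  obtain ⟨i, hi, hεi⟩ := ((Metric.tendstoUniformly_iff.1 hunif _ (half_pos hδ)).and
    (hε.eventually (gt_mem_nhds (half_pos hδ)))).exists
  obtain ⟨x, hx⟩ := hdense i x'
  refine ⟨ψ x, mem_range_self x, ?_⟩
  calc dist x' (ψ x) ≤ dist (F i x) x' + dist (F i x) (ψ x) := dist_triangle_left _ _ _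
    _ < δ := by linarith [hi x, dist_comm (F i x) (ψ x)]

theorem measure_preimage_le_of_tendstoUniformly [MeasurableSpace X] [MeasurableSpace X']
    [OpensMeasurableSpace X']
    {μ : Measure X} {μ' : Measure X'} [IsFiniteMeasure μ'] [l.NeBot] (hε : Tendsto ε l (𝓝 0))
    (hunif : TendstoUniformly F ψ l)
    (hmeas : ∀ i A', MeasurableSet A' →
      μ (F i ⁻¹' A') ≤ μ' (thickening (ε i) A') + ENNReal.ofReal (ε i))
    {A' : Set X'} (hA' : IsClosed A') : μ (ψ ⁻¹' A') ≤ μ' A' := by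
  refine le_measure_of_forall_le_thickening_add hA' fun δ hδ => ?_
  obtain ⟨i, hi, hεi⟩ := ((Metric.tendstoUniformly_iff.1 hunif _ (half_pos hδ)).and
    (hε.eventually (gt_mem_nhds (half_pos hδ)))).exists
  have hsub : ψ ⁻¹' A' ⊆ F i ⁻¹' thickening (δ / 2) A' := fun x hx =>
    mem_thickening_iff.2 ⟨ψ x, hx, by rw [dist_comm]; exact hi x⟩
  calc μ (ψ ⁻¹' A') ≤ μ (F i ⁻¹' thickening (δ / 2) A') := measure_mono hsub
    _ ≤ μ' (thickening (ε i) (thickening (δ / 2) A')) + ENNReal.ofReal (ε i) :=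
        hmeas i _ isOpen_thickening.measurableSet
    _ ≤ μ' (thickening δ A') + ENNReal.ofReal δ := by
        gcongr
        · exact (thickening_thickening_subset _ _ _).trans (thickening_mono (by linarith) _)
        · linarith

end LimitOfApproximations

/-- If the measured Gromov–Hausdorff distance between two compact metric measure spaces
vanishes, then there is a measure-preserving isometry between them. -/
theorem dmGH_eq_zero_iff_isometric
    {X X' : Type*} [MetricSpace X] [MetricSpace X']
    [CompactSpace X] [CompactSpace X']
    [MeasurableSpace X] [MeasurableSpace X'] [BorelSpace X] [BorelSpace X']
    (μ : Measure X) (μ' : Measure X')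
    [IsProbabilityMeasure μ] [IsProbabilityMeasure μ']
    (h : dmGH μ μ' = 0) :
    ∃ ψ : X ≃ᵢ X', Measure.map ψ μ = μ' := by
  choose ε hε_pos hε_lt happrox using fun n : ℕ =>
    exists_mghApprox_lt_of_dmGH_eq_zero h (Nat.one_div_pos_of_nat (α := ℝ) (n := n))
  choose F _ _ _ hdist hdense _ _ hmeas _ using happrox
  have hε : Tendsto ε atTop (𝓝 0) := squeeze_zero (fun n => (hε_pos n).le)
    (fun n => (hε_lt n).le) tendsto_one_div_add_atTop_nhds_zero_nat
  let U := Ultrafilter.of (atTop : Filter ℕ)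
  have hεU : Tendsto ε U (𝓝 0) := hε.mono_left (Ultrafilter.of_le _)
  let ψ x := (U.map (F · x)).lim
  have hψ : ∀ x, Tendsto (F · x) U (𝓝 (ψ x)) := fun x => (U.map (F · x)).le_nhds_lim
  have hiso := isometry_of_tendsto_of_distortion_le hεU (fun n x y => (hdist n x y).le) hψ
  have hunif := tendstoUniformly_of_tendsto_of_distortion_le hεU
    (fun n x y => (hdist n x y).le) hψ hiso
  have hsurj := surjective_of_tendstoUniformly hεU
    (fun n x' => (hdense n x').imp fun _ => le_of_lt) hunif hiso.continuous
  have hmap : Measure.map ψ μ = μ' := by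
    have := Measure.isProbabilityMeasure_map (μ := μ) hiso.continuous.measurable.aemeasurable
    refine Measure.eq_of_forall_isClosed_measure_le fun A' hA' => ?_
    rw [Measure.map_apply hiso.continuous.measurable hA'.measurableSet]
    exact measure_preimage_le_of_tendstoUniformly hεU hunif
      (fun n A' hA' => (hmeas n A' hA').le) hA'
  exact ⟨⟨Equiv.ofBijective ψ ⟨hiso.injective, hsurj⟩, hiso⟩, hmap⟩
end

section
/- Let $(\lambda_p)_{p\ge0}$ be nonnegative reals with $\lambda_p \ge c\,p^{2/n}$ for some $c>0$, $n\ge1$, and let $(\phi_p)$ be functions on a set $X$ with $\|\phi_p\|_{\infty} \le C_F(1+\lambda_p^2)^{s_F/2}$ for constants $C_F,s_F>0$. Then for every $0<\sigma<1$ there exists $C(\sigma)>0$ (depending on $c,n,C_F,s_F,\sigma$ but not on $E$, $t$, $x$, $\tilde x$) such that for all $E>0$, $t>0$ and $x,\tilde x\in X$: $\left|\sum_{p:\lambda_p\ge E} e^{-\lambda_p t}\,\phi_p(x)\phi_p(\tilde x)\right| \le C(\sigma)\,(1+t^{-(n/2+2s_F)})\,e^{-(1-\sigma)Et}$, where the series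 converges absolutely. -/
/-!
Split `e^{-λ t} = e^{-(1-σ) λ t} · e^{-u λ} · e^{-u λ}` with `u = σ t / 2`. On the tail `λ ≥ E` the
first factor is at most `e^{-(1-σ) E t}`; the second absorbs the eigenfunction growth, since
`(1 + λ²)^{s} e^{-u λ} ≲ 1 + u^{-2s}`; and by the Weyl bound the third is at most
`e^{-u c p^{2/n}}`, whose sum over `p` is `≲ 1 + (u c)^{-n/2}`: bound the terms by `1` for
`p ≤ (u c)^{-n/2}` and by `n! (u c)^{-n} p^{-2}` beyond.
-/

open Real Finset

lemma rpow_mul_exp_neg_mul_le {a u x : ℝ} (ha : 0 < a) (hu : 0 < u) (hx : 0 ≤ x) :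
    x ^ a * exp (-(u * x)) ≤ a ^ a * u ^ (-a) := by
  have hlin : u * x ≤ a * exp (u * x / a) := by
    rw [← div_le_iff₀' ha]
    linarith [add_one_le_exp (u * x / a)]
  have hpow : u ^ a * x ^ a ≤ a ^ a * exp (u * x) := by
    calc u ^ a * x ^ a = (u * x) ^ a := (mul_rpow hu.le hx).symm
      _ ≤ (a * exp (u * x / a)) ^ a := rpow_le_rpow (by positivity) hlin ha.le
      _ = a ^ a * exp (u * x) := by
        rw [mul_rpow ha.le (exp_pos _).le, ← exp_mul, div_mul_cancel₀ _ ha.ne']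
  rw [rpow_neg hu.le, ← div_eq_mul_inv, le_div_iff₀ (rpow_pos_of_pos hu a)]
  calc x ^ a * exp (-(u * x)) * u ^ a = (u ^ a * x ^ a) * exp (-(u * x)) := by ring
    _ ≤ a ^ a * exp (u * x) * exp (-(u * x)) := by gcongr
    _ = a ^ a := by rw [mul_assoc, ← exp_add, add_neg_cancel, exp_zero, mul_one]

lemma one_add_sq_rpow_mul_exp_neg_mul_le {s u x : ℝ} (hs : 0 < s) (hu : 0 < u) (hx : 0 ≤ x) :
    (1 + x ^ 2) ^ s * exp (-(u * x)) ≤ 2 ^ s * (1 + (2 * s) ^ (2 * s) * u ^ (-(2 * s))) := by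
  have hrest : 0 ≤ (2 * s) ^ (2 * s) * u ^ (-(2 * s)) := by positivity
  rcases le_total x 1 with hx1 | hx1
  · have hbase : (1 + x ^ 2) ^ s ≤ 2 ^ s :=
      rpow_le_rpow (by positivity) (by nlinarith) hs.le
    have hexp : exp (-(u * x)) ≤ 1 := exp_le_one_iff.2 (by nlinarith)
    calc (1 + x ^ 2) ^ s * exp (-(u * x)) ≤ 2 ^ s * 1 :=
          mul_le_mul hbase hexp (exp_pos _).le (by positivity)
      _ ≤ 2 ^ s * (1 + (2 * s) ^ (2 * s) * u ^ (-(2 * s))) := by gcongr; linarith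
  · have hbase : (1 + x ^ 2) ^ s ≤ 2 ^ s * x ^ (2 * s) := by
      calc (1 + x ^ 2) ^ s ≤ (2 * x ^ 2) ^ s := rpow_le_rpow (by positivity) (by nlinarith) hs.le
        _ = 2 ^ s * x ^ (2 * s) := by
          rw [mul_rpow zero_le_two (by positivity), ← rpow_natCast, ← rpow_mul hx]
          norm_num
    calc (1 + x ^ 2) ^ s * exp (-(u * x)) ≤ 2 ^ s * (x ^ (2 * s) * exp (-(u * x))) := by
          rw [← mul_assoc]; gcongr
      _ ≤ 2 ^ s * ((2 * s) ^ (2 * s) * u ^ (-(2 * s))) :=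
          mul_le_mul_of_nonneg_left (rpow_mul_exp_neg_mul_le (by positivity) hu hx)
            (by positivity)
      _ ≤ 2 ^ s * (1 + (2 * s) ^ (2 * s) * u ^ (-(2 * s))) := by gcongr; linarith

lemma sum_range_le_of_le_one_of_le_mul_div_sq {f : ℕ → ℝ} {A D : ℝ} (hA : 0 ≤ A) (hD : 0 ≤ D)
    (h_one : ∀ p, f p ≤ 1) (h_sq : ∀ p, 0 < p → f p ≤ A * (D / p) ^ 2) (N : ℕ) :
    ∑ p ∈ range N, f p ≤ 1 + (1 + 2 * A) * D := by
  set k := ⌊D⌋₊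
  have hk : D < k + 1 := Nat.lt_floor_add_one D
  rw [← sum_filter_add_sum_filter_not (range N) (· ≤ k)]
  have head : ∑ p ∈ (range N).filter (· ≤ k), f p ≤ k + 1 := by
    calc ∑ p ∈ (range N).filter (· ≤ k), f p ≤ ∑ _p ∈ (range N).filter (· ≤ k), (1 : ℝ) :=
          sum_le_sum fun p _ => h_one p
      _ ≤ ((range (k + 1)).card : ℝ) := by
          rw [sum_const, nsmul_one]
          gcongr
          intro p hp
          simp only [mem_filter, mem_range] at hp ⊢
          omega
      _ = k + 1 := by simp
  have tail : ∑ p ∈ (range N).filter (¬ · ≤ k), f p ≤ A * D ^ 2 * (2 / (k + 1)) := by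
    calc ∑ p ∈ (range N).filter (¬ · ≤ k), f p
        ≤ ∑ p ∈ (range N).filter (¬ · ≤ k), A * D ^ 2 * ((p : ℝ) ^ 2)⁻¹ := by
          refine sum_le_sum fun p hp => (h_sq p ?_).trans_eq (by ring)
          simp only [mem_filter] at hp
          omega
      _ ≤ ∑ p ∈ Ioo k N, A * D ^ 2 * ((p : ℝ) ^ 2)⁻¹ := by
          refine sum_le_sum_of_subset_of_nonneg (fun p hp => ?_) fun p _ _ => by positivity
          simp only [mem_filter, mem_range, mem_Ioo] at hp ⊢
          omega
      _ ≤ A * D ^ 2 * (2 / (k + 1)) := by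
          rw [← mul_sum]
          gcongr
          exact sum_Ioo_inv_sq_le k N
  have htail_le : A * D ^ 2 * (2 / (k + 1)) ≤ 2 * A * D := by
    rw [mul_div_assoc', div_le_iff₀ (by positivity)]
    nlinarith [mul_nonneg hA hD]
  linarith [Nat.floor_le hD]

lemma summable_and_tsum_le_of_le_one_of_le_mul_div_sq {f : ℕ → ℝ} {A D : ℝ} (hA : 0 ≤ A)
    (hD : 0 ≤ D) (h_nonneg : ∀ p, 0 ≤ f p) (h_one : ∀ p, f p ≤ 1)
    (h_sq : ∀ p, 0 < p → f p ≤ A * (D / p) ^ 2) :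
    Summable f ∧ ∑' p, f p ≤ 1 + (1 + 2 * A) * D :=
  have h := sum_range_le_of_le_one_of_le_mul_div_sq hA hD h_one h_sq
  ⟨summable_of_sum_range_le h_nonneg h, Real.tsum_le_of_sum_range_le h_nonneg h⟩

lemma exp_neg_mul_rpow_two_div_le {n p : ℕ} {b : ℝ} (hn : 1 ≤ n) (hb : 0 < b) (hp : 0 < p) :
    exp (-(b * (p : ℝ) ^ ((2 : ℝ) / n))) ≤ n.factorial * (b ^ (-((n : ℝ) / 2)) / p) ^ 2 := by
  have hn0 : (n : ℝ) ≠ 0 := by positivity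
  have hp0 : (0 : ℝ) < p := by exact_mod_cast hp
  set y := b * (p : ℝ) ^ ((2 : ℝ) / n)
  have hy : 0 < y := by positivity
  have hyn : y ^ n = b ^ n * (p : ℝ) ^ 2 := by
    rw [mul_pow, ← rpow_natCast ((p : ℝ) ^ _), ← rpow_mul hp0.le, div_mul_cancel₀ _ hn0]
    norm_num
  have hscale : (b ^ (-((n : ℝ) / 2)) / p) ^ 2 = (y ^ n)⁻¹ := by
    rw [hyn, div_pow, ← rpow_natCast (b ^ _), ← rpow_mul hb.le,
      show -((n : ℝ) / 2) * ((2 : ℕ) : ℝ) = -n by push_cast; ring, rpow_neg hb.le,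
      rpow_natCast, mul_inv, div_eq_mul_inv]
  have hfact : y ^ n ≤ exp y * n.factorial := by
    have := pow_div_factorial_le_exp y hy.le n
    rwa [div_le_iff₀ (by positivity)] at this
  rw [hscale, exp_neg, ← div_eq_mul_inv, le_div_iff₀ (by positivity),
    inv_mul_le_iff₀ (exp_pos y)]
  exact hfact

lemma summable_and_tsum_exp_neg_mul_rpow_le {n : ℕ} {b : ℝ} (hn : 1 ≤ n) (hb : 0 < b) :
    Summable (fun p : ℕ => exp (-(b * (p : ℝ) ^ ((2 : ℝ) / n)))) ∧
      ∑' p : ℕ, exp (-(b * (p : ℝ) ^ ((2 : ℝ) / n))) ≤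
        1 + (1 + 2 * n.factorial) * b ^ (-((n : ℝ) / 2)) :=
  summable_and_tsum_le_of_le_one_of_le_mul_div_sq (by positivity) (by positivity)
    (fun _ => (exp_pos _).le) (fun _ => exp_le_one_iff.2 (by simp only [neg_nonpos]; positivity))
    (fun _ hp => exp_neg_mul_rpow_two_div_le hn hb hp)

lemma rpow_neg_le_one_add_rpow_neg {t γ δ : ℝ} (ht : 0 < t) (hγ : 0 ≤ γ) (hγδ : γ ≤ δ) :
    t ^ (-γ) ≤ 1 + t ^ (-δ) := by
  rcases le_total 1 t with h | h
  · linarith [rpow_le_one_of_one_le_of_nonpos h (neg_nonpos.2 hγ), rpow_nonneg ht.le (-δ)]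
  · linarith [rpow_le_rpow_of_exponent_ge ht h (neg_le_neg hγδ)]

lemma one_add_mul_rpow_neg_mul_one_add_mul_rpow_neg_le {t κ μ A B α β : ℝ} (ht : 0 < t)
    (hκ : 0 < κ) (hμ : 0 < μ) (hA : 0 ≤ A) (hB : 0 ≤ B) (hα : 0 ≤ α) (hβ : 0 ≤ β) :
    (1 + A * (κ * t) ^ (-α)) * (1 + B * (μ * t) ^ (-β)) ≤
      (1 + A * κ ^ (-α)) * (1 + B * μ ^ (-β)) * (1 + t ^ (-(α + β))) := by
  have hA' : 0 ≤ A * κ ^ (-α) := by positivity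
  have hB' : 0 ≤ B * μ ^ (-β) := by positivity
  have hexpand : (1 + A * (κ * t) ^ (-α)) * (1 + B * (μ * t) ^ (-β)) =
      1 + A * κ ^ (-α) * t ^ (-α) + B * μ ^ (-β) * t ^ (-β) +
        A * κ ^ (-α) * (B * μ ^ (-β)) * t ^ (-(α + β)) := by
    rw [mul_rpow hκ.le ht.le, mul_rpow hμ.le ht.le, neg_add, rpow_add ht]; ring
  have hα' := rpow_neg_le_one_add_rpow_neg ht hα (le_add_of_nonneg_right hβ)
  have hβ' := rpow_neg_le_one_add_rpow_neg ht hβ (le_add_of_nonneg_left hα)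
  rw [hexpand]
  nlinarith [mul_le_mul_of_nonneg_left hα' hA', mul_le_mul_of_nonneg_left hβ' hB',
    mul_nonneg hA' hB', rpow_nonneg ht.le (-(α + β))]

lemma abs_exp_neg_mul_mul_mul_le {n p : ℕ} {c C_F s σ t E l a a' : ℝ} (hs : 0 < s)
    (hσ0 : 0 < σ) (hσ1 : σ ≤ 1) (ht : 0 < t) (hl : 0 ≤ l) (hEl : E ≤ l)
    (hweyl : c * (p : ℝ) ^ ((2 : ℝ) / n) ≤ l)
    (ha : |a| ≤ C_F * (1 + l ^ 2) ^ (s / 2)) (ha' : |a'| ≤ C_F * (1 + l ^ 2) ^ (s / 2)) :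
    |exp (-l * t) * a * a'| ≤
      C_F ^ 2 * 2 ^ s * (1 + (2 * s) ^ (2 * s) * (σ / 2 * t) ^ (-(2 * s))) *
        exp (-(1 - σ) * E * t) * exp (-(σ / 2 * c * t * (p : ℝ) ^ ((2 : ℝ) / n))) := by
  have hu : 0 < σ / 2 * t := by positivity
  have hprod : |a * a'| ≤ C_F ^ 2 * (1 + l ^ 2) ^ s := by
    calc |a * a'| ≤ (C_F * (1 + l ^ 2) ^ (s / 2)) * (C_F * (1 + l ^ 2) ^ (s / 2)) := by
          rw [abs_mul]; exact mul_le_mul ha ha' (abs_nonneg _) ((abs_nonneg _).trans ha)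
      _ = C_F ^ 2 * (1 + l ^ 2) ^ s := by
          rw [mul_mul_mul_comm, ← rpow_add (by positivity), add_halves]
          ring
  have hsplit : exp (-l * t) =
      exp (-((1 - σ) * l * t)) * exp (-(σ / 2 * t * l)) * exp (-(σ / 2 * t * l)) := by
    rw [← exp_add, ← exp_add]; ring_nf
  have hfirst : exp (-((1 - σ) * l * t)) ≤ exp (-(1 - σ) * E * t) := by
    have := mul_nonneg (mul_nonneg (sub_nonneg.2 hσ1) ht.le) (sub_nonneg.2 hEl)
    exact exp_le_exp.2 (by nlinarith)
  have hsecond := one_add_sq_rpow_mul_exp_neg_mul_le hs hu hl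
  have hthird : exp (-(σ / 2 * t * l)) ≤ exp (-(σ / 2 * c * t * (p : ℝ) ^ ((2 : ℝ) / n))) :=
    exp_le_exp.2 (neg_le_neg (by
      rw [show σ / 2 * c * t = σ / 2 * t * c by ring, mul_assoc]
      exact mul_le_mul_of_nonneg_left hweyl hu.le))
  calc |exp (-l * t) * a * a'| = exp (-l * t) * |a * a'| := by
        rw [mul_assoc, abs_mul, abs_of_pos (exp_pos _)]
    _ ≤ exp (-l * t) * (C_F ^ 2 * (1 + l ^ 2) ^ s) := by gcongr
    _ = C_F ^ 2 * ((1 + l ^ 2) ^ s * exp (-(σ / 2 * t * l))) * exp (-((1 - σ) * l * t)) *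
          exp (-(σ / 2 * t * l)) := by rw [hsplit]; ring
    _ ≤ C_F ^ 2 * (2 ^ s * (1 + (2 * s) ^ (2 * s) * (σ / 2 * t) ^ (-(2 * s)))) *
          exp (-(1 - σ) * E * t) * exp (-(σ / 2 * c * t * (p : ℝ) ^ ((2 : ℝ) / n))) := by gcongr
    _ = _ := by ring

/-- Tail estimate for the heat kernel eigenfunction expansion: under a Weyl-type lower
bound `λ_p ≥ c p^{2/n}` on the eigenvalues and sup-norm bounds
`‖φ_p‖_∞ ≤ C_F (1 + λ_p²)^{s_F/2}` on the eigenfunctions, for every `0 < σ < 1` there is a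
constant `C = C(c, n, C_F, s_F, σ)` such that for all `E > 0`, `t > 0` and points `x, x̃`,
`|∑_{λ_p ≥ E} e^{-λ_p t} φ_p(x) φ_p(x̃)| ≤ C (1 + t^{-(n/2 + 2 s_F)}) e^{-(1-σ) E t}`,
the series converging absolutely. -/
theorem heat_kernel_tail_estimate
    (n : ℕ) (hn : 1 ≤ n) (c C_F s_F : ℝ) (hc : 0 < c) (hCF : 0 < C_F) (hsF : 0 < s_F)
    (σ : ℝ) (hσ0 : 0 < σ) (hσ1 : σ < 1) :
    ∃ C > (0 : ℝ), ∀ (X : Type) (lam : ℕ → ℝ) (φ : ℕ → X → ℝ),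
      (∀ p, 0 ≤ lam p) →
      (∀ p : ℕ, c * (p : ℝ) ^ ((2 : ℝ) / n) ≤ lam p) →
      (∀ p x, |φ p x| ≤ C_F * (1 + (lam p) ^ 2) ^ (s_F / 2)) →
      ∀ E > (0 : ℝ), ∀ t > (0 : ℝ), ∀ x x' : X,
        Summable (fun p => if E ≤ lam p then Real.exp (-(lam p) * t) * φ p x * φ p x' else 0) ∧
        |∑' p, if E ≤ lam p then Real.exp (-(lam p) * t) * φ p x * φ p x' else 0|
          ≤ C * (1 + t ^ (-((n : ℝ) / 2 + 2 * s_F))) * Real.exp (-(1 - σ) * E * t) := by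
  set M₀ := C_F ^ 2 * 2 ^ s_F
  refine ⟨M₀ * (1 + (1 + 2 * n.factorial) * (σ / 2 * c) ^ (-((n : ℝ) / 2))) *
    (1 + (2 * s_F) ^ (2 * s_F) * (σ / 2) ^ (-(2 * s_F))), by positivity, ?_⟩
  intro X lam φ hlam hweyl hφ E _ t ht x x'
  obtain ⟨hsum, hsum_le⟩ :=
    summable_and_tsum_exp_neg_mul_rpow_le hn (b := σ / 2 * c * t) (by positivity)
  set M := M₀ * (1 + (2 * s_F) ^ (2 * s_F) * (σ / 2 * t) ^ (-(2 * s_F))) * exp (-(1 - σ) * E * t)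
  have hterm : ∀ p, ‖if E ≤ lam p then exp (-(lam p) * t) * φ p x * φ p x' else 0‖ ≤
      M * exp (-(σ / 2 * c * t * (p : ℝ) ^ ((2 : ℝ) / n))) := by
    intro p
    split_ifs with hEp
    · exact abs_exp_neg_mul_mul_mul_le hsF hσ0 hσ1.le ht (hlam p) hEp (hweyl p) (hφ p x) (hφ p x')
    · rw [norm_zero]; positivity
  have hscale := one_add_mul_rpow_neg_mul_one_add_mul_rpow_neg_le ht (by positivity : 0 < σ / 2 * c)
    (by positivity : 0 < σ / 2) (by positivity : 0 ≤ 1 + 2 * (n.factorial : ℝ))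
    (by positivity : 0 ≤ (2 * s_F) ^ (2 * s_F)) (by positivity : 0 ≤ (n : ℝ) / 2)
    (by positivity : 0 ≤ 2 * s_F)
  refine ⟨(hsum.mul_left M).of_norm_bounded hterm, ?_⟩
  calc _ ≤ M * ∑' p : ℕ, exp (-(σ / 2 * c * t * (p : ℝ) ^ ((2 : ℝ) / n))) :=
        tsum_of_norm_bounded (hsum.hasSum.mul_left M) hterm
    _ ≤ M * (1 + (1 + 2 * n.factorial) * (σ / 2 * c * t) ^ (-((n : ℝ) / 2))) := by gcongr
    _ ≤ _ := by
        nlinarith [mul_le_mul_of_nonneg_left hscale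
          (by positivity : 0 ≤ M₀ * exp (-(1 - σ) * E * t))]
end
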